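/- Let P: ℝ³ → ℝ^{3×3} be a differentiable tensor field and Q ∈ SO(3) constant. Define P♯(ξ) := Q P(Q^T ξ) Q^T. Then Curl_ξ P♯(ξ) = Q · (Curl_x P)(Q^T ξ) · Q^T. -/

import Mathlib

/-!
By the chain rule, `∂_b P♯_{ia}(ξ) = ∑ Q_{ik} Q_{al} Q_{bc} (∂_c P_{kl})(Qᵀξ)`. Contracting with
`ε_{abj}`, the two factors `Q_{al} Q_{bc}` are absorbed by the invariance of the Levi-Civita symbol
under `SO(3)`: `∑_{a,b} Q_{al} Q_{bc} ε_{abj} = ∑_m Q_{jm} ε_{lcm}`, which follows from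
`∑ ε_{abj} Q_{al} Q_{bc} Q_{jm} = det Q · ε_{lcm}` and `Q Qᵀ = 1`.
-/

open Matrix

noncomputable section

def eps (i j k : Fin 3) : ℝ :=
  if (i = 0 ∧ j = 1 ∧ k = 2) ∨ (i = 1 ∧ j = 2 ∧ k = 0) ∨ (i = 2 ∧ j = 0 ∧ k = 1) then 1
  else if (i = 2 ∧ j = 1 ∧ k = 0) ∨ (i = 1 ∧ j = 0 ∧ k = 2) ∨ (i = 0 ∧ j = 2 ∧ k = 1) then -1
  else 0

def tCurl (X : (Fin 3 → ℝ) → Matrix (Fin 3) (Fin 3) ℝ) (x : Fin 3 → ℝ) :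
    Matrix (Fin 3) (Fin 3) ℝ :=
  Matrix.of fun i j => -∑ a, ∑ b, fderiv ℝ (fun y => X y i a) x (Pi.single b 1) * eps a b j

theorem sum_eps_mul_eq_det_mul_eps (Q : Matrix (Fin 3) (Fin 3) ℝ) (l c m : Fin 3) :
    ∑ a, ∑ b, ∑ j, eps a b j * Q a l * Q b c * Q j m = Q.det * eps l c m := by
  fin_cases l <;> fin_cases c <;> fin_cases m <;>
    simp [eps, Fin.sum_univ_three, det_fin_three] <;> ring

theorem sum_mul_mul_eps_of_special_orthogonal {Q : Matrix (Fin 3) (Fin 3) ℝ} (hQ : Q * Qᵀ = 1)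
    (hdet : Q.det = 1) (l c j : Fin 3) :
    ∑ a, ∑ b, Q a l * Q b c * eps a b j = ∑ m, Q j m * eps l c m := by
  set v : Fin 3 → ℝ := fun j => ∑ a, ∑ b, Q a l * Q b c * eps a b j
  have hv : Qᵀ *ᵥ v = eps l c := by
    ext m
    simp only [v, mulVec, dotProduct, transpose_apply, Finset.mul_sum]
    rw [← one_mul (eps l c m), ← hdet, ← sum_eps_mul_eq_det_mul_eps, Finset.sum_comm]
    refine Finset.sum_congr rfl fun a _ => ?_
    rw [Finset.sum_comm]
    exact Finset.sum_congr rfl fun b _ => Finset.sum_congr rfl fun j _ => by ring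
  calc v j = ((Q * Qᵀ) *ᵥ v) j := by rw [hQ, one_mulVec]
    _ = ∑ m, Q j m * eps l c m := by rw [← mulVec_mulVec, hv]; rfl

theorem ContinuousLinearMap.apply_eq_sum_single {n F : Type*} [Fintype n] [DecidableEq n]
    [NormedAddCommGroup F] [NormedSpace ℝ F] (L : (n → ℝ) →L[ℝ] F) (v : n → ℝ) :
    L v = ∑ c, v c • L (Pi.single c 1) := by
  conv_lhs => rw [pi_eq_sum_univ' v, map_sum]
  simp only [map_smul]

theorem fderiv_comp_mulVec_apply {m n F : Type*} [Fintype m] [Fintype n]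
    [NormedAddCommGroup F] [NormedSpace ℝ F]
    (A : Matrix m n ℝ) {f : (m → ℝ) → F} {x : n → ℝ} (hf : DifferentiableAt ℝ f (A *ᵥ x))
    (v : n → ℝ) :
    fderiv ℝ (fun y => f (A *ᵥ y)) x v = fderiv ℝ f (A *ᵥ x) (A *ᵥ v) := by
  let L : (n → ℝ) →L[ℝ] (m → ℝ) := LinearMap.toContinuousLinearMap A.mulVecLin
  have h : HasFDerivAt (fun y => f (A *ᵥ y)) ((fderiv ℝ f (A *ᵥ x)).comp L) x :=
    hf.hasFDerivAt.comp x L.hasFDerivAt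
  rw [h.fderiv]
  rfl

theorem fderiv_mul_mul_apply {E k l m n : Type*} [NormedAddCommGroup E] [NormedSpace ℝ E]
    [Fintype l] [Fintype m] (A : Matrix k l ℝ) (B : Matrix m n ℝ) {M : E → Matrix l m ℝ} {x : E}
    (hM : ∀ p q, DifferentiableAt ℝ (fun y => M y p q) x) (i : k) (a : n) (v : E) :
    fderiv ℝ (fun y => (A * M y * B) i a) x v
      = ∑ p, ∑ q, A i p * B q a * fderiv ℝ (fun y => M y p q) x v := by
  have hsum : (fun y => (A * M y * B) i a) = fun y => ∑ p, ∑ q, (A i p * B q a) * M y p q := by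
    funext y
    simp only [mul_apply, Finset.sum_mul]
    rw [Finset.sum_comm]
    exact Finset.sum_congr rfl fun q _ => Finset.sum_congr rfl fun p _ => by ring
  have hderiv := HasFDerivAt.fun_sum (u := Finset.univ) fun p _ =>
    HasFDerivAt.fun_sum (u := Finset.univ) fun q _ =>
      (hM p q).hasFDerivAt.const_mul (A i p * B q a)
  rw [hsum, hderiv.fderiv]
  simp [smul_eq_mul]

theorem fderiv_conj_comp_transpose_mulVec_single {n : Type*} [Fintype n] [DecidableEq n]
    {P : (n → ℝ) → Matrix n n ℝ} (Q : Matrix n n ℝ) {ξ : n → ℝ}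
    (hP : ∀ k l, DifferentiableAt ℝ (fun y => P y k l) (Qᵀ *ᵥ ξ)) (i a b : n) :
    fderiv ℝ (fun η => (Q * P (Qᵀ *ᵥ η) * Qᵀ) i a) ξ (Pi.single b 1)
      = ∑ k, ∑ l, Q i k * Q a l *
          ∑ c, Q b c * fderiv ℝ (fun y => P y k l) (Qᵀ *ᵥ ξ) (Pi.single c 1) := by
  have hcomp : ∀ k l, DifferentiableAt ℝ (fun η => P (Qᵀ *ᵥ η) k l) ξ := fun k l =>
    (hP k l).comp ξ Qᵀ.mulVecLin.toContinuousLinearMap.differentiableAt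
  rw [fderiv_mul_mul_apply Q Qᵀ hcomp]
  refine Finset.sum_congr rfl fun k _ => Finset.sum_congr rfl fun l _ => ?_
  rw [fderiv_comp_mulVec_apply Qᵀ (hP k l), ContinuousLinearMap.apply_eq_sum_single]
  simp

theorem neg_sum_conj_mul_eps_eq {Q : Matrix (Fin 3) (Fin 3) ℝ} (hQ : Q * Qᵀ = 1)
    (hdet : Q.det = 1) (D : Fin 3 → Fin 3 → Fin 3 → ℝ) (i j : Fin 3) :
    -∑ a, ∑ b, (∑ k, ∑ l, Q i k * Q a l * ∑ c, Q b c * D k l c) * eps a b j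
      = ∑ m, (∑ k, Q i k * -∑ l, ∑ c, D k l c * eps l c m) * Q j m := by
  calc _ = -∑ k, ∑ l, ∑ c, Q i k * D k l c * ∑ a, ∑ b, Q a l * Q b c * eps a b j := by
        simp only [Fin.sum_univ_three]; ring
    _ = -∑ k, ∑ l, ∑ c, Q i k * D k l c * ∑ m, Q j m * eps l c m := by
        simp only [sum_mul_mul_eps_of_special_orthogonal hQ hdet]
    _ = _ := by simp only [Fin.sum_univ_three]; ring

theorem tCurl_sharp_transform (P : (Fin 3 → ℝ) → Matrix (Fin 3) (Fin 3) ℝ)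
    (hP : ∀ i j, Differentiable ℝ (fun y => P y i j))
    (Q : Matrix (Fin 3) (Fin 3) ℝ) (hQ : Qᵀ * Q = 1) (hdet : Q.det = 1) (ξ : Fin 3 → ℝ) :
    tCurl (fun η => Q * P (Qᵀ.mulVec η) * Qᵀ) ξ = Q * tCurl P (Qᵀ.mulVec ξ) * Qᵀ := by
  ext i j
  simp only [tCurl, of_apply,
    fderiv_conj_comp_transpose_mulVec_single Q fun k l => (hP k l).differentiableAt]
  simp only [mul_apply, of_apply, transpose_apply]
  exact neg_sum_conj_mul_eps_eq (mul_eq_one_comm.mp hQ) hdet _ i j
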